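/- Let C be a nodal curve with marked smooth point σ(0), and fix irreducible components C_γ, C_{γ'}. If Z is a 3-tail of C with C_γ ∪ C_{γ'} ⊆ Z and σ(0) ∈ Z^c, then there exists a Z-terminal tail W (i.e., Term_W ∩ Term_Z ≠ ∅) such that either W belongs to the nested set T²_{γ,γ'} of 2-tails, or W belongs to the nested set T³_{γ,γ'} of 3-tails and W ⊆ Z. -/

import Mathlib

open Finset

/-- A combinatorial model of a nodal curve: `V` is the set of irreducible
components, `N` the set of nodes, `ends e` the (one or two) components through
the node `e`, `gen v` the geometric genus of the component `v`, and `base` the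
component containing the marked smooth point `σ(0)`. -/
structure NodalGraph where
  V : Type
  N : Type
  [fV : Fintype V]
  [dV : DecidableEq V]
  [fN : Fintype N]
  [dN : DecidableEq N]
  ends : N → V × V
  gen : V → ℕ
  base : V

attribute [instance] NodalGraph.fV NodalGraph.dV NodalGraph.fN NodalGraph.dN

namespace NodalGraph

variable (G : NodalGraph)

/-- Two components are adjacent if some node lies on both. -/
def Adj (a b : G.V) : Prop := ∃ e, G.ends e = (a, b) ∨ G.ends e = (b, a)

/-- The set of terminal points of a subcurve `Z`, i.e. the nodes in `Z ∩ Zᶜ`. -/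
def Term (Z : Finset G.V) : Finset G.N :=
  univ.filter (fun e =>
    ((G.ends e).1 ∈ Z ∧ (G.ends e).2 ∉ Z) ∨ ((G.ends e).1 ∉ Z ∧ (G.ends e).2 ∈ Z))

/-- `k_Z`, the number of terminal points of `Z`. -/
def k (Z : Finset G.V) : ℕ := (G.Term Z).card

/-- A (nonempty) subcurve is connected. -/
def ConnSub (Z : Finset G.V) : Prop :=
  Z.Nonempty ∧ ∀ u ∈ Z, ∀ v ∈ Z,
    Relation.ReflTransGen (fun a b => a ∈ Z ∧ b ∈ Z ∧ G.Adj a b) u v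

/-- The whole curve is connected. -/
def Connected : Prop := G.ConnSub univ

/-- A tail: a proper subcurve `Z` with both `Z` and `Zᶜ` connected. -/
def IsTail (Z : Finset G.V) : Prop := Z ≠ univ ∧ G.ConnSub Z ∧ G.ConnSub Zᶜ

/-- A `m`-tail: a tail with `k_Z = m`. -/
def IsKTail (Z : Finset G.V) (m : ℕ) : Prop := G.IsTail Z ∧ G.k Z = m

/-- The node `e` lies on the component `v`. -/
def onComp (e : G.N) (v : G.V) : Prop := (G.ends e).1 = v ∨ (G.ends e).2 = v

/-- The node `e`, as a point of the curve, lies on the subcurve `Z`. -/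
def nodeOn (e : G.N) (Z : Finset G.V) : Prop := (G.ends e).1 ∈ Z ∨ (G.ends e).2 ∈ Z

/-- The subcurve `Z` crosses the node `e`: both branches of `e` lie in `Z`. -/
def crosses (Z : Finset G.V) (e : G.N) : Prop := (G.ends e).1 ∈ Z ∧ (G.ends e).2 ∈ Z

/-- `Z ≺ Z'`: strict inclusion with disjoint terminal points. -/
def prec (Z Z' : Finset G.V) : Prop := Z ⊂ Z' ∧ G.Term Z ∩ G.Term Z' = ∅

/-- The pair `(Z, Z')` is free: disjoint terminal points. -/
def free (Z Z' : Finset G.V) : Prop := G.Term Z ∩ G.Term Z' = ∅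

/-- The pair `(Z, Z')` is perfect. -/
def perfect (Z Z' : Finset G.V) : Prop := Z ⊆ Z' ∨ Z' ⊆ Z ∨ Zᶜ ⊆ Z' ∨ Z' ⊆ Zᶜ

/-- `T¹_γ`: the nested set of 1-tails containing `C_γ` and avoiding `σ(0)`. -/
def T1 (γ : G.V) : Set (Finset G.V) := { Z | G.IsKTail Z 1 ∧ γ ∈ Z ∧ G.base ∉ Z }

/-- The defining condition for the 2-tails entering `T²_{γ,γ'}`. -/
def cond2 (γ γ' : G.V) (Z : Finset G.V) : Prop :=
  G.IsKTail Z 2 ∧ γ ∈ Z ∧ γ' ∈ Z ∧ G.base ∉ Z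

/-- `W 0 ≺ W 1 ≺ ⋯ ≺ W (M-1)` is the nested set `T²_{γ,γ'}` of 2-tails:
each `W t` is minimal among the 2-tails `Z ⊇ C_γ ∪ C_γ'` with `σ(0) ∈ Zᶜ`
and `W (t-1) ≺ Z` (starting from `W_{-1} = ∅`), and the chain is maximal. -/
def IsNested2 (γ γ' : G.V) (M : ℕ) (W : ℕ → Finset G.V) : Prop :=
  (∀ t < M, Minimal (fun Z => G.cond2 γ γ' Z ∧ G.prec (if t = 0 then ∅ else W (t - 1)) Z) (W t)) ∧
  ¬ ∃ Z, G.cond2 γ γ' Z ∧ G.prec (if M = 0 then ∅ else W (M - 1)) Z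

/-- The set underlying a finite chain `W 0, …, W (M-1)`. -/
def chainSet (M : ℕ) (W : ℕ → Finset G.V) : Set (Finset G.V) := { Z | ∃ t < M, W t = Z }

/-- The defining condition for the 3-tails entering `T³_{γ,γ'}`:
3-tails that are moreover free with respect to every member of `T²_{γ,γ'}`. -/
def cond3 (γ γ' : G.V) (T2 : Set (Finset G.V)) (Z : Finset G.V) : Prop :=
  G.IsKTail Z 3 ∧ γ ∈ Z ∧ γ' ∈ Z ∧ G.base ∉ Z ∧ ∀ W ∈ T2, G.free Z W

/-- `W 0 ≺ ⋯ ≺ W (M-1)` is the nested set `T³_{γ,γ'}` of 3-tails (relative to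
the set `T2` of nested 2-tails). -/
def IsNested3 (γ γ' : G.V) (T2 : Set (Finset G.V)) (M : ℕ) (W : ℕ → Finset G.V) : Prop :=
  (∀ t < M, Minimal (fun Z => G.cond3 γ γ' T2 Z ∧ G.prec (if t = 0 then ∅ else W (t - 1)) Z) (W t)) ∧
  ¬ ∃ Z, G.cond3 γ γ' T2 Z ∧ G.prec (if M = 0 then ∅ else W (M - 1)) Z

end NodalGraph
/-!
Crossing tails `W`, `Y` (containing `C_γ`, avoiding `σ(0)`, neither inside the other) are
uncrossed by submodularity, `k (W ∩ Y) + k (W ∪ Y) ≤ k W + k Y`, while connectivity of `W`, `Y`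
and of their complements forces `k (W ∩ Y) ≥ 2` and `k (W ∪ Y) ≥ 2`. For two 2-tails this makes
`W ∩ Y` a smaller 2-tail; for two 3-tails free from `T²` it makes `W ∩ Y` a smaller 3-tail, or
`W ∩ Y` or `W ∪ Y` a 2-tail free from `T²`, which the maximality of `T²` excludes. So a minimal
member of either nested set lies inside every competitor. If `Z` is free from `T²`, climbing `T³`
inside `Z` must then stop at a member sharing a terminal point with `Z`; otherwise some member
of `T²` already does.
-/

namespace NodalGraph

variable {G : NodalGraph}

theorem Adj.symm {a b : G.V} (h : G.Adj a b) : G.Adj b a := by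
  obtain ⟨e, he⟩ := h
  exact ⟨e, he.symm⟩

def AdjIn (S : Finset G.V) (a b : G.V) : Prop := a ∈ S ∧ b ∈ S ∧ G.Adj a b

instance (S : Finset G.V) : Std.Symm (G.AdjIn S) where
  symm _ _ h := ⟨h.2.1, h.1, h.2.2.symm⟩

theorem AdjIn.mono {S T : Finset G.V} (hST : S ⊆ T) {a b : G.V} (h : G.AdjIn S a b) :
    G.AdjIn T a b :=
  ⟨hST h.1, hST h.2.1, h.2.2⟩

theorem connSub_iff {S : Finset G.V} :
    G.ConnSub S ↔ S.Nonempty ∧ ∀ u ∈ S, ∀ v ∈ S, Relation.ReflTransGen (G.AdjIn S) u v :=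
  Iff.rfl

theorem connSub_union {X Y : Finset G.V} (hX : G.ConnSub X) (hY : G.ConnSub Y) {w : G.V}
    (hwX : w ∈ X) (hwY : w ∈ Y) : G.ConnSub (X ∪ Y) := by
  have toW : ∀ u ∈ X ∪ Y, Relation.ReflTransGen (G.AdjIn (X ∪ Y)) u w := by
    intro u hu
    rcases mem_union.mp hu with hu | hu
    · exact Relation.ReflTransGen.mono (fun _ _ => AdjIn.mono subset_union_left) u w
        ((connSub_iff.mp hX).2 u hu w hwX)
    · exact Relation.ReflTransGen.mono (fun _ _ => AdjIn.mono subset_union_right) u w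
        ((connSub_iff.mp hY).2 u hu w hwY)
  exact ⟨⟨w, mem_union_left _ hwX⟩, fun u hu v hv => (toW u hu).trans (symm (toW v hv))⟩

theorem exists_adj_inter_sdiff_of_connSub {A X : Finset G.V} (hA : G.ConnSub A) {u v : G.V}
    (hu : u ∈ A ∩ X) (hv : v ∈ A \ X) : ∃ a ∈ A ∩ X, ∃ b ∈ A \ X, G.Adj a b := by
  have hpath := (connSub_iff.mp hA).2 u (mem_inter.mp hu).1 v (mem_sdiff.mp hv).1
  induction hpath with
  | refl => exact absurd (mem_inter.mp hu).2 (mem_sdiff.mp hv).2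
  | @tail b c _ hbc ih =>
    by_cases hb : b ∈ X
    · exact ⟨b, mem_inter.mpr ⟨hbc.1, hb⟩, c, hv, hbc.2.2⟩
    · exact ih (mem_sdiff.mpr ⟨hbc.1, hb⟩)

/-- A path in `A` that leaves `X` must leave and re-enter it through `x`. -/
theorem connSub_of_adj_out_eq {A X : Finset G.V} (hA : G.ConnSub A) (hXA : X ⊆ A)
    (hX : X.Nonempty) (x : G.V) (hx : ∀ a ∈ X, ∀ b ∈ A \ X, G.Adj a b → a = x) :
    G.ConnSub X := by
  refine ⟨hX, fun u hu v hv => ?_⟩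
  suffices H : ∀ w, Relation.ReflTransGen (G.AdjIn A) u w →
      (w ∈ X → Relation.ReflTransGen (G.AdjIn X) u w) ∧
      (w ∉ X → Relation.ReflTransGen (G.AdjIn X) u x) from
    (H v ((connSub_iff.mp hA).2 u (hXA hu) v (hXA hv))).1 hv
  intro w hw
  induction hw with
  | refl => exact ⟨fun _ => .refl, fun h => absurd hu h⟩
  | @tail b c _ hbc ih =>
    by_cases hb : b ∈ X <;> by_cases hc : c ∈ X
    · exact ⟨fun _ => (ih.1 hb).tail ⟨hb, hc, hbc.2.2⟩, fun h => absurd hc h⟩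
    · have hbx := hx b hb c (mem_sdiff.mpr ⟨hbc.2.1, hc⟩) hbc.2.2
      exact ⟨fun h => absurd h hc, fun _ => hbx ▸ ih.1 hb⟩
    · have hcx := hx c hc b (mem_sdiff.mpr ⟨hbc.1, hb⟩) hbc.2.2.symm
      exact ⟨fun _ => hcx ▸ ih.2 hb, fun h => absurd hc h⟩
    · exact ⟨fun h => absurd h hc, fun _ => ih.2 hb⟩

theorem term_empty : G.Term ∅ = ∅ := by
  ext e
  simp [Term]

theorem term_compl (Z : Finset G.V) : G.Term Zᶜ = G.Term Z := by
  ext e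
  simp only [Term, mem_filter, mem_univ, true_and, mem_compl]
  tauto

theorem k_compl (Z : Finset G.V) : G.k Zᶜ = G.k Z := by
  rw [k, k, term_compl]

theorem term_inter_subset (W Y : Finset G.V) : G.Term (W ∩ Y) ⊆ G.Term W ∪ G.Term Y := by
  intro e
  simp only [Term, mem_filter, mem_univ, true_and, mem_union, mem_inter]
  tauto

theorem term_union_subset (W Y : Finset G.V) : G.Term (W ∪ Y) ⊆ G.Term W ∪ G.Term Y := by
  rw [← term_compl, compl_union, ← term_compl W, ← term_compl Y]
  exact term_inter_subset _ _

theorem term_inter_inter_term_union_subset (W Y : Finset G.V) :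
    G.Term (W ∩ Y) ∩ G.Term (W ∪ Y) ⊆ G.Term W ∩ G.Term Y := by
  intro e
  simp only [Term, mem_filter, mem_univ, true_and, mem_union, mem_inter]
  tauto

theorem k_inter_add_k_union_le (W Y : Finset G.V) :
    G.k (W ∩ Y) + G.k (W ∪ Y) ≤ G.k W + G.k Y := by
  calc G.k (W ∩ Y) + G.k (W ∪ Y)
      = #(G.Term (W ∩ Y) ∪ G.Term (W ∪ Y)) + #(G.Term (W ∩ Y) ∩ G.Term (W ∪ Y)) :=
        (card_union_add_card_inter _ _).symm
    _ ≤ #(G.Term W ∪ G.Term Y) + #(G.Term W ∩ G.Term Y) :=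
        add_le_add (card_le_card (union_subset (term_inter_subset W Y) (term_union_subset W Y)))
          (card_le_card (term_inter_inter_term_union_subset W Y))
    _ = G.k W + G.k Y := card_union_add_card_inter _ _

theorem free.symm {X Y : Finset G.V} (h : G.free X Y) : G.free Y X := by
  rwa [free, inter_comm]

theorem not_free_iff {X Y : Finset G.V} : ¬ G.free X Y ↔ (G.Term X ∩ G.Term Y).Nonempty :=
  nonempty_iff_ne_empty.symm

theorem free_of_term_subset_union {X W Y T : Finset G.V}
    (hX : G.Term X ⊆ G.Term W ∪ G.Term Y) (hW : G.free W T) (hY : G.free Y T) :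
    G.free X T := by
  rw [free, ← subset_empty] at *
  calc G.Term X ∩ G.Term T ⊆ (G.Term W ∪ G.Term Y) ∩ G.Term T := inter_subset_inter_right hX
    _ = G.Term W ∩ G.Term T ∪ G.Term Y ∩ G.Term T := union_inter_distrib_right _ _ _
    _ ⊆ ∅ := union_subset hW hY

theorem free.inter {W Y T : Finset G.V} (hW : G.free W T) (hY : G.free Y T) :
    G.free (W ∩ Y) T :=
  free_of_term_subset_union (term_inter_subset W Y) hW hY

theorem free.union {W Y T : Finset G.V} (hW : G.free W T) (hY : G.free Y T) :
    G.free (W ∪ Y) T :=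
  free_of_term_subset_union (term_union_subset W Y) hW hY

theorem free.ne {X Y : Finset G.V} (h : G.free X Y) (hY : (G.Term Y).Nonempty) : X ≠ Y := by
  rintro rfl
  rw [free, inter_self] at h
  exact hY.ne_empty h

theorem prec_empty {Y : Finset G.V} (hY : Y.Nonempty) : G.prec ∅ Y :=
  ⟨empty_ssubset.mpr hY, by rw [term_empty, empty_inter]⟩

theorem prec.inter {P W Y : Finset G.V} (hW : G.prec P W) (hY : G.prec P Y)
    (hWY : (G.Term (W ∩ Y)).Nonempty) : G.prec P (W ∩ Y) := by
  have hPW : G.free P W := hW.2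
  have hPY : G.free P Y := hY.2
  have hfree : G.free P (W ∩ Y) := (hPW.symm.inter hPY.symm).symm
  exact ⟨(subset_inter hW.1.subset hY.1.subset).ssubset_of_ne (hfree.ne hWY), hfree⟩

/-- The edges joining `W ∩ Y` to `W \ Y`. -/
def cutIn (W Y : Finset G.V) : Finset G.N :=
  (G.Term Y).filter fun e => (G.ends e).1 ∈ W ∧ (G.ends e).2 ∈ W

theorem exists_mem_cutIn_of_adj {W Y : Finset G.V} {a b : G.V} (ha : a ∈ W ∩ Y)
    (hb : b ∈ W \ Y) (hab : G.Adj a b) :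
    ∃ e ∈ G.cutIn W Y, G.ends e = (a, b) ∨ G.ends e = (b, a) := by
  obtain ⟨e, he⟩ := hab
  refine ⟨e, ?_, he⟩
  simp only [mem_inter, mem_sdiff] at ha hb
  rcases he with he | he <;>
    simp [cutIn, Term, he, ha.1, ha.2, hb.1, hb.2]

theorem cutIn_nonempty {W Y : Finset G.V} (hW : G.ConnSub W) (hI : (W ∩ Y).Nonempty)
    (hD : (W \ Y).Nonempty) : (G.cutIn W Y).Nonempty := by
  obtain ⟨a, ha, b, hb, hab⟩ := exists_adj_inter_sdiff_of_connSub hW hI.choose_spec hD.choose_spec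
  obtain ⟨e, he, -⟩ := exists_mem_cutIn_of_adj ha hb hab
  exact ⟨e, he⟩

theorem cutIn_subset_term_inter (W Y : Finset G.V) : G.cutIn W Y ⊆ G.Term (W ∩ Y) := by
  intro e
  simp only [cutIn, Term, mem_filter, mem_univ, true_and, mem_inter]
  tauto

theorem disjoint_cutIn (W Y : Finset G.V) : Disjoint (G.cutIn W Y) (G.cutIn Y W) := by
  rw [disjoint_left]
  intro e
  simp only [cutIn, Term, mem_filter, mem_univ, true_and]
  tauto

theorem card_cutIn_add_card_cutIn_le (W Y : Finset G.V) :
    #(G.cutIn W Y) + #(G.cutIn Y W) ≤ G.k (W ∩ Y) := by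
  rw [← card_union_of_disjoint (disjoint_cutIn W Y)]
  refine card_le_card (union_subset (cutIn_subset_term_inter W Y) ?_)
  rw [inter_comm]
  exact cutIn_subset_term_inter Y W

theorem connSub_inter_of_card_cutIn_le_one {W Y : Finset G.V} (hW : G.ConnSub W)
    (hI : (W ∩ Y).Nonempty) (hcut : #(G.cutIn W Y) ≤ 1) : G.ConnSub (W ∩ Y) := by
  have hout : ∀ {b}, b ∈ W \ (W ∩ Y) → b ∈ W \ Y := fun hb => by simpa using hb
  by_cases hedge : ∃ x ∈ W ∩ Y, ∃ b ∈ W \ (W ∩ Y), G.Adj x b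
  · -- `x` is the `Y`-end of the only edge `e₀` of the cut.
    obtain ⟨x, hx, b₀, hb₀, hxb₀⟩ := hedge
    obtain ⟨e₀, he₀, hends₀⟩ := exists_mem_cutIn_of_adj hx (hout hb₀) hxb₀
    refine connSub_of_adj_out_eq hW inter_subset_left hI x fun a ha b hb hab => ?_
    obtain ⟨e, he, hends⟩ := exists_mem_cutIn_of_adj ha (hout hb) hab
    obtain rfl := card_le_one.mp hcut e he e₀ he₀
    have haY := (mem_inter.mp ha).2
    have hxY := (mem_inter.mp hx).2
    have hbY := (mem_sdiff.mp (hout hb)).2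
    have hb₀Y := (mem_sdiff.mp (hout hb₀)).2
    rcases hends with h | h <;> rcases hends₀ with h₀ | h₀ <;> rw [h] at h₀ <;>
      simp only [Prod.mk.injEq] at h₀ <;> grind
  · exact connSub_of_adj_out_eq hW inter_subset_left hI hI.choose
      fun a ha b hb hab => absurd ⟨a, ha, b, hb, hab⟩ hedge

def IsCrossing {α : Type*} [Fintype α] [DecidableEq α] (W Y : Finset α) : Prop :=
  (W \ Y).Nonempty ∧ (Y \ W).Nonempty ∧ (W ∩ Y).Nonempty ∧ (W ∪ Y)ᶜ.Nonempty

theorem IsCrossing.compl {α : Type*} [Fintype α] [DecidableEq α] {W Y : Finset α}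
    (h : IsCrossing W Y) : IsCrossing Wᶜ Yᶜ := by
  obtain ⟨hWY, hYW, hI, hU⟩ := h
  refine ⟨?_, ?_, ?_, ?_⟩
  · rwa [compl_sdiff_compl]
  · rwa [compl_sdiff_compl]
  · rwa [← compl_union]
  · rwa [compl_union, compl_compl, compl_compl]

theorem two_le_k_inter {W Y : Finset G.V} (hW : G.ConnSub W) (hY : G.ConnSub Y)
    (h : IsCrossing W Y) : 2 ≤ G.k (W ∩ Y) := by
  obtain ⟨hWY, hYW, hI, -⟩ := h
  have hcutW := (cutIn_nonempty hW hI hWY).card_pos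
  have hcutY := (cutIn_nonempty hY (inter_comm W Y ▸ hI) hYW).card_pos
  have := card_cutIn_add_card_cutIn_le (G := G) W Y
  omega

/-- With at most three terminal points, one of the two cuts has a single edge. -/
theorem connSub_inter_of_k_le_three {W Y : Finset G.V} (hW : G.ConnSub W) (hY : G.ConnSub Y)
    (h : IsCrossing W Y) (hk : G.k (W ∩ Y) ≤ 3) : G.ConnSub (W ∩ Y) := by
  obtain ⟨hWY, hYW, hI, -⟩ := h
  have hcutW := (cutIn_nonempty hW hI hWY).card_pos
  have hcutY := (cutIn_nonempty hY (inter_comm W Y ▸ hI) hYW).card_pos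
  have := card_cutIn_add_card_cutIn_le (G := G) W Y
  by_cases hcard : #(G.cutIn W Y) ≤ 1
  · exact connSub_inter_of_card_cutIn_le_one hW hI hcard
  · rw [inter_comm] at hI ⊢
    exact connSub_inter_of_card_cutIn_le_one hY hI (by omega)

theorem IsTail.compl {Z : Finset G.V} (hZ : G.IsTail Z) : G.IsTail Zᶜ :=
  ⟨fun h => hZ.2.1.1.ne_empty ((compl_eq_univ_iff Z).mp h), hZ.2.2, (compl_compl Z).symm ▸ hZ.2.1⟩

theorem IsTail.inter {W Y : Finset G.V} (hW : G.IsTail W) (hY : G.IsTail Y)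
    (h : IsCrossing W Y) (hk : G.k (W ∩ Y) ≤ 3) : G.IsTail (W ∩ Y) := by
  obtain ⟨u, hu⟩ := h.2.2.2
  rw [compl_union] at hu
  refine ⟨fun hI => hW.1 (univ_subset_iff.mp (hI ▸ inter_subset_left)),
    connSub_inter_of_k_le_three hW.2.1 hY.2.1 h hk, ?_⟩
  rw [compl_inter]
  exact connSub_union hW.2.2 hY.2.2 (mem_inter.mp hu).1 (mem_inter.mp hu).2

theorem IsTail.union {W Y : Finset G.V} (hW : G.IsTail W) (hY : G.IsTail Y)
    (h : IsCrossing W Y) (hk : G.k (W ∪ Y) ≤ 3) : G.IsTail (W ∪ Y) := by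
  rw [← k_compl, compl_union] at hk
  have h' := (hW.compl.inter hY.compl h.compl hk).compl
  rwa [compl_inter, compl_compl, compl_compl] at h'

theorem two_le_k_union {W Y : Finset G.V} (hW : G.IsTail W) (hY : G.IsTail Y)
    (h : IsCrossing W Y) : 2 ≤ G.k (W ∪ Y) := by
  rw [← k_compl, compl_union]
  exact two_le_k_inter hW.2.2 hY.2.2 h.compl

theorem term_nonempty_of_k_pos {Z : Finset G.V} (h : 0 < G.k Z) : (G.Term Z).Nonempty :=
  card_pos.mp h

/-- `IsNested2 γ γ'` and `IsNested3 γ γ' T2` unfold to this, with `C` their defining condition. -/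
def IsNestedChain (C : Finset G.V → Prop) (M : ℕ) (W : ℕ → Finset G.V) : Prop :=
  (∀ t < M, Minimal (fun Z => C Z ∧ G.prec (if t = 0 then ∅ else W (t - 1)) Z) (W t)) ∧
  ¬ ∃ Z, C Z ∧ G.prec (if M = 0 then ∅ else W (M - 1)) Z

/-- Otherwise `Y` would be `≻` every member of the chain, and extend it. -/
theorem exists_terminal_of_isNestedChain {C : Finset G.V → Prop} {M : ℕ} {W : ℕ → Finset G.V}
    (hle : ∀ ⦃P X Y⦄, Minimal (fun Z => C Z ∧ G.prec P Z) X → C Y → G.prec P Y → X ⊆ Y)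
    (hW : G.IsNestedChain C M W) {Y : Finset G.V} (hY : C Y) (hYt : (G.Term Y).Nonempty) :
    ∃ t < M, W t ⊆ Y ∧ (G.Term (W t) ∩ G.Term Y).Nonempty := by
  by_contra! hfree
  have hYne : Y.Nonempty := nonempty_iff_ne_empty.mpr fun h => hYt.ne_empty (h ▸ term_empty)
  suffices H : ∀ s ≤ M, G.prec (if s = 0 then ∅ else W (s - 1)) Y from
    hW.2 ⟨Y, hY, H M le_rfl⟩
  intro s
  induction s with
  | zero => simpa using prec_empty hYne
  | succ s ih =>
    intro hs
    have hsub := hle (hW.1 s (by omega)) hY (ih (by omega))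
    have hsY : G.free (W s) Y := hfree s (by omega) hsub
    have hprec : G.prec (W s) Y := ⟨hsub.ssubset_of_ne (hsY.ne hYt), hsY⟩
    simpa only [Nat.add_one_ne_zero, if_false, Nat.add_sub_cancel] using hprec

theorem isCrossing_of_not_subset {γ : G.V} {W Y : Finset G.V} (hγW : γ ∈ W) (hγY : γ ∈ Y)
    (hbW : G.base ∉ W) (hbY : G.base ∉ Y) (hWY : ¬ W ⊆ Y) (hYW : ¬ Y ⊆ W) : IsCrossing W Y :=
  ⟨sdiff_nonempty.mpr hWY, sdiff_nonempty.mpr hYW, ⟨γ, mem_inter.mpr ⟨hγW, hγY⟩⟩,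
    ⟨G.base, by simp [hbW, hbY]⟩⟩

theorem subset_of_minimal_cond2 {γ γ' : G.V} ⦃P X Y : Finset G.V⦄
    (hX : Minimal (fun Z => G.cond2 γ γ' Z ∧ G.prec P Z) X) (hY : G.cond2 γ γ' Y)
    (hYP : G.prec P Y) : X ⊆ Y := by
  by_contra hXY
  have hYX : ¬ Y ⊆ X := fun h => hXY (hX.2 ⟨hY, hYP⟩ h)
  obtain ⟨⟨⟨hXt, hkX⟩, hγX, hγ'X, hbX⟩, hXP⟩ := hX.1
  obtain ⟨⟨hYt, hkY⟩, hγY, hγ'Y, hbY⟩ := hY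
  have hc := isCrossing_of_not_subset hγX hγY hbX hbY hXY hYX
  have hI := two_le_k_inter hXt.2.1 hYt.2.1 hc
  have hU := two_le_k_union hXt hYt hc
  have hsum := k_inter_add_k_union_le X Y
  have hk : G.k (X ∩ Y) = 2 := by omega
  have hcond : G.cond2 γ γ' (X ∩ Y) :=
    ⟨⟨hXt.inter hYt hc (by omega), hk⟩, mem_inter.mpr ⟨hγX, hγY⟩, mem_inter.mpr ⟨hγ'X, hγ'Y⟩,
      fun h => hbX (mem_inter.mp h).1⟩
  have hprec := hXP.inter hYP (term_nonempty_of_k_pos (by omega))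
  exact hXY ((hX.2 ⟨hcond, hprec⟩ inter_subset_left).trans inter_subset_right)

theorem exists_not_free_of_cond2 {γ γ' : G.V} {M : ℕ} {W : ℕ → Finset G.V}
    (h2 : G.IsNested2 γ γ' M W) {Y : Finset G.V} (hY : G.cond2 γ γ' Y) :
    ∃ T ∈ G.chainSet M W, ¬ G.free Y T := by
  obtain ⟨t, ht, -, hterm⟩ := exists_terminal_of_isNestedChain subset_of_minimal_cond2 h2 hY
    (term_nonempty_of_k_pos (by rw [hY.1.2]; omega))
  exact ⟨W t, ⟨t, ht, rfl⟩, not_free_iff.mpr (inter_comm (G.Term Y) _ ▸ hterm)⟩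

theorem subset_of_minimal_cond3 {γ γ' : G.V} {M : ℕ} {W : ℕ → Finset G.V}
    (h2 : G.IsNested2 γ γ' M W) ⦃P X Y : Finset G.V⦄
    (hX : Minimal (fun Z => G.cond3 γ γ' (G.chainSet M W) Z ∧ G.prec P Z) X)
    (hY : G.cond3 γ γ' (G.chainSet M W) Y) (hYP : G.prec P Y) : X ⊆ Y := by
  by_contra hXY
  have hYX : ¬ Y ⊆ X := fun h => hXY (hX.2 ⟨hY, hYP⟩ h)
  obtain ⟨⟨⟨hXt, hkX⟩, hγX, hγ'X, hbX, hXfree⟩, hXP⟩ := hX.1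
  obtain ⟨⟨hYt, hkY⟩, hγY, hγ'Y, hbY, hYfree⟩ := hY
  have hc := isCrossing_of_not_subset hγX hγY hbX hbY hXY hYX
  have hI := two_le_k_inter hXt.2.1 hYt.2.1 hc
  have hU := two_le_k_union hXt hYt hc
  have hsum := k_inter_add_k_union_le X Y
  have hbI : G.base ∉ X ∩ Y := fun h => hbX (mem_inter.mp h).1
  obtain hk | hk | hk : G.k (X ∩ Y) = 2 ∨ G.k (X ∪ Y) = 2 ∨ G.k (X ∩ Y) = 3 := by omega
  · obtain ⟨T, hT, hnot⟩ := exists_not_free_of_cond2 h2 (Y := X ∩ Y)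
      ⟨⟨hXt.inter hYt hc (by omega), hk⟩, mem_inter.mpr ⟨hγX, hγY⟩,
        mem_inter.mpr ⟨hγ'X, hγ'Y⟩, hbI⟩
    exact hnot ((hXfree T hT).inter (hYfree T hT))
  · obtain ⟨T, hT, hnot⟩ := exists_not_free_of_cond2 h2 (Y := X ∪ Y)
      ⟨⟨hXt.union hYt hc (by omega), hk⟩, mem_union_left _ hγX, mem_union_left _ hγ'X,
        by simp [hbX, hbY]⟩
    exact hnot ((hXfree T hT).union (hYfree T hT))
  · have hcond : G.cond3 γ γ' (G.chainSet M W) (X ∩ Y) :=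
      ⟨⟨hXt.inter hYt hc (by omega), hk⟩, mem_inter.mpr ⟨hγX, hγY⟩,
        mem_inter.mpr ⟨hγ'X, hγ'Y⟩, hbI, fun T hT => (hXfree T hT).inter (hYfree T hT)⟩
    have hprec := hXP.inter hYP (term_nonempty_of_k_pos (by omega))
    exact hXY ((hX.2 ⟨hcond, hprec⟩ inter_subset_left).trans inter_subset_right)

end NodalGraph

theorem exists_Zterminal_for_three_tail_general
    (G : NodalGraph) (γ γ' : G.V)
    (M2 : ℕ) (W2 : ℕ → Finset G.V) (h2 : G.IsNested2 γ γ' M2 W2)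
    (M3 : ℕ) (W3 : ℕ → Finset G.V)
    (h3 : G.IsNested3 γ γ' (G.chainSet M2 W2) M3 W3)
    (Z : Finset G.V) (hZ : G.IsKTail Z 3) (hγ : γ ∈ Z) (hγ' : γ' ∈ Z)
    (hb : G.base ∈ Zᶜ) :
    ∃ Wt : Finset G.V, (G.Term Wt ∩ G.Term Z).Nonempty ∧
      (Wt ∈ G.chainSet M2 W2 ∨ (Wt ∈ G.chainSet M3 W3 ∧ Wt ⊆ Z)) := by
  by_cases hfree : ∀ T ∈ G.chainSet M2 W2, G.free Z T
  · obtain ⟨t, ht, hsub, hterm⟩ :=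
      NodalGraph.exists_terminal_of_isNestedChain (NodalGraph.subset_of_minimal_cond3 h2) h3
        ⟨hZ, hγ, hγ', mem_compl.mp hb, hfree⟩
        (NodalGraph.term_nonempty_of_k_pos (by rw [hZ.2]; omega))
    exact ⟨W3 t, hterm, Or.inr ⟨⟨t, ht, rfl⟩, hsub⟩⟩
  · obtain ⟨T, hT, hnot⟩ := not_forall₂.mp hfree
    exact ⟨T, inter_comm (G.Term Z) _ ▸ NodalGraph.not_free_iff.mp hnot, Or.inl hT⟩

/-- Lemma 2.6: every 3-tail `Z ⊇ C_γ ∪ C_{γ'}` with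
`σ(0) ∈ Zᶜ` admits a `Z`-terminal tail `W` that either lies in `T²_{γ,γ'}`, or
lies in `T³_{γ,γ'}` and is contained in `Z`. -/
theorem exists_Zterminal_for_three_tail
    (G : NodalGraph) (hconn : G.Connected) (γ γ' : G.V)
    (M2 : ℕ) (W2 : ℕ → Finset G.V) (h2 : G.IsNested2 γ γ' M2 W2)
    (M3 : ℕ) (W3 : ℕ → Finset G.V)
    (h3 : G.IsNested3 γ γ' (G.chainSet M2 W2) M3 W3)
    (Z : Finset G.V) (hZ : G.IsKTail Z 3) (hγ : γ ∈ Z) (hγ' : γ' ∈ Z)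
    (hb : G.base ∈ Zᶜ) :
    ∃ Wt : Finset G.V, (G.Term Wt ∩ G.Term Z).Nonempty ∧
      (Wt ∈ G.chainSet M2 W2 ∨ (Wt ∈ G.chainSet M3 W3 ∧ Wt ⊆ Z)) :=
  exists_Zterminal_for_three_tail_general G γ γ' M2 W2 h2 M3 W3 h3 Z hZ hγ hγ' hb
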